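/- Let n ≥ 1 and ℓ ≥ 2 be integers with n ≤ 3^{ℓ-2}, let t be a word of length ℓ over A, and let u be a finite word over A having t as a prefix. Then every boolean factor of length n that occurs in T(u) also occurs in T(t). -/

import Mathlib

/-- The alphabet B = {0, 1, ?}. -/
inductive B : Type
  | b0 : B
  | b1 : B
  | bq : B
deriving DecidableEq, Inhabited, Repr

/-- The six Stewart patterns a = 01?, b = 10?, c = 0?1, d = 1?0, e = ?01, f = ?10. -/
inductive A : Type
  | a : A
  | b : A
  | c : A
  | d : A
  | e : A
  | f : A
deriving DecidableEq, Inhabited, Repr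

open B in
/-- The length-3 word over B associated with a Stewart pattern. -/
def pat : A → List B
  | .a => [b0, b1, bq]
  | .b => [b1, b0, bq]
  | .c => [b0, bq, b1]
  | .d => [b1, bq, b0]
  | .e => [bq, b0, b1]
  | .f => [bq, b1, b0]

/-- Replace the occurrences of `?` in the first word, in order,
by the symbols of the second word. -/
def fill : List B → List B → List B
  | [], _ => []
  | B.bq :: rest, s :: ss => s :: fill rest ss
  | B.bq :: rest, [] => B.bq :: fill rest []
  | x :: rest, ss => x :: fill rest ss

/-- Helper: the finite Stewart word of the *reverse* of `t`. -/
def Trev : List A → List B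
  | [] => [B.bq]
  | g :: t => fill (Trev t ++ Trev t ++ Trev t) (pat g)

/-- The finite Stewart word `T(t)`, of length `3 ^ t.length`:
`T(ε) = ?`, and `T(t g)` is obtained from `T(t)T(t)T(t)` by replacing its
three occurrences of `?`, in order, by the three symbols of the pattern `g`. -/
def stewT (t : List A) : List B := Trev t.reverse

/-- The length-`r` prefix of an infinite sequence of Stewart patterns, as a list. -/
def prefT (t : ℕ → A) (r : ℕ) : List A := List.ofFn (fun i : Fin r => t i)

/-- The infinite Stewart word `T(𝐭)`: its symbol at position `n` is the eventual
value of `T(t_0 ⋯ t_{r-1})[n]` as `r → ∞`. -/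
noncomputable def stewInf (t : ℕ → A) (n : ℕ) : B :=
  Classical.epsilon (fun v : B => ∃ R : ℕ, ∀ r ≥ R, (stewT (prefT t r)).getD n B.bq = v)

/-- `w` occurs as a factor of the infinite word `x`. -/
def FactorOf (w : List B) (x : ℕ → B) : Prop :=
  ∃ i : ℕ, ∀ j : ℕ, j < w.length → w.getD j B.bq = x (i + j)

/-- `w` has period `p ≥ 1`: `w[i] = w[i+p]` for all `0 ≤ i < |w| - p`. -/
def HasPeriod (w : List B) (p : ℕ) : Prop :=
  1 ≤ p ∧ ∀ i : ℕ, i + p < w.length → w.getD i B.bq = w.getD (i + p) B.bq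

/-- The least period `per(w)` of a word. -/
noncomputable def leastPeriod (w : List B) : ℕ := sInf {p | HasPeriod w p}

/-- The exponent `exp(w) = |w| / per(w)` of a word. -/
noncomputable def expo (w : List B) : ℝ := (w.length : ℝ) / (leastPeriod w : ℝ)

/-- The Hamming distance between two Stewart patterns: the number of positions
`p ∈ {0,1,2}` at which the length-3 words differ. -/
def ham (g h : A) : ℕ :=
  (Finset.univ.filter fun p : Fin 3 => (pat g).getD p B.bq ≠ (pat h).getD p B.bq).card

/-- `t` is ultimately periodic. -/
def UltPeriodic (t : ℕ → A) : Prop :=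
  ∃ N : ℕ, ∃ p : ℕ, 1 ≤ p ∧ ∀ n ≥ N, t (n + p) = t n

/-- An infinite word `x` is 3-automatic: there is a finite automaton with output,
reading base-3 representations least-significant-digit first (trailing zeros
allowed), computing `x`. -/
def IsThreeAutomatic (x : ℕ → B) : Prop :=
  ∃ (Q : Type) (_ : Finite Q) (δ : Q → Fin 3 → Q) (q0 : Q) (τ : Q → B),
    ∀ (r : ℕ) (e : Fin r → Fin 3),
      τ (List.foldl δ q0 (List.ofFn fun i => e i)) =
        x (∑ i : Fin r, (e i).val * 3 ^ (i : ℕ))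

section StewAux

open B List

instance : Fintype B :=
  ⟨⟨{B.b0, B.b1, B.bq}, by decide⟩, by intro x; cases x <;> decide⟩

instance : Fintype A :=
  ⟨⟨{A.a, A.b, A.c, A.d, A.e, A.f}, by decide⟩, by intro x; cases x <;> decide⟩

@[simp] lemma fill_nil' (ss : List B) : fill [] ss = [] := rfl
@[simp] lemma fill_bq_cons (r : List B) (s : B) (ss : List B) :
    fill (B.bq :: r) (s :: ss) = s :: fill r ss := rfl
@[simp] lemma fill_bq_nil (r : List B) : fill (B.bq :: r) [] = B.bq :: fill r [] := rfl
@[simp] lemma fill_b0 (r ss : List B) : fill (B.b0 :: r) ss = B.b0 :: fill r ss := by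
  cases ss <;> rfl
@[simp] lemma fill_b1 (r ss : List B) : fill (B.b1 :: r) ss = B.b1 :: fill r ss := by
  cases ss <;> rfl

@[simp] lemma fill_nil_right (w : List B) : fill w [] = w := by
  induction w with
  | nil => rfl
  | cons x r ih => cases x <;> simp [ih]

@[simp] lemma length_fill (w ss : List B) : (fill w ss).length = w.length := by
  induction w generalizing ss with
  | nil => rfl
  | cons x r ih => cases x <;> cases ss <;> simp [ih]

lemma fill_append (w₁ w₂ ss : List B) :
    fill (w₁ ++ w₂) ss
      = fill w₁ (ss.take (w₁.count B.bq)) ++ fill w₂ (ss.drop (w₁.count B.bq)) := by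
  induction w₁ generalizing ss with
  | nil => simp
  | cons x r ih =>
    cases x <;> cases ss <;>
      simp [ih, List.count_cons, List.take_succ_cons, List.drop_succ_cons]

@[simp] lemma fill_bq_single (w : List B) : fill w [B.bq] = w := by
  induction w with
  | nil => rfl
  | cons x r ih => cases x <;> simp [ih]

lemma fill_eq_self_of_not_mem (w ss : List B) (h : B.bq ∉ w) : fill w ss = w := by
  induction w generalizing ss with
  | nil => rfl
  | cons x r ih =>
    cases x with
    | b0 => simp [ih _ fun hm => h (List.mem_cons_of_mem _ hm)]
    | b1 => simp [ih _ fun hm => h (List.mem_cons_of_mem _ hm)]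
    | bq => simp at h

lemma count_fill_single (w : List B) (c : B) (h : w.count B.bq = 1) (hc : c ≠ B.bq) :
    (fill w [c]).count B.bq = 0 := by
  induction w with
  | nil => simp at h
  | cons x r ih =>
    cases x with
    | bq =>
      have hr : r.count B.bq = 0 := by simpa using h
      have : B.bq ∉ r := (List.count_eq_zero).1 hr
      simp [List.count_cons, hc, (List.count_eq_zero).2 this]
    | b0 =>
      have hr : r.count B.bq = 1 := by simpa using h
      simp [List.count_cons, ih hr]
    | b1 =>
      have hr : r.count B.bq = 1 := by simpa using h
      simp [List.count_cons, ih hr]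

lemma fill_triple (X : List B) (hX : X.count B.bq = 1) (p0 p1 p2 : B) :
    fill (X ++ (X ++ X)) [p0, p1, p2]
      = fill X [p0] ++ (fill X [p1] ++ fill X [p2]) := by
  rw [fill_append, hX]
  simp only [List.take_succ_cons, List.take_zero, List.drop_succ_cons, List.drop_zero]
  rw [fill_append, hX]
  simp

lemma count_Trev (z : List A) : (Trev z).count B.bq = 1 := by
  induction z with
  | nil => simp [Trev]
  | cons g z ih =>
    rw [show Trev (g :: z) = fill (Trev z ++ Trev z ++ Trev z) (pat g) from rfl,
      List.append_assoc]
    cases g <;> simp only [pat] <;> rw [fill_triple _ ih] <;>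
      simp [List.count_append, count_fill_single _ _ ih, ih]

lemma length_Trev (z : List A) : (Trev z).length = 3 ^ z.length := by
  induction z with
  | nil => simp [Trev]
  | cons g z ih =>
    rw [show Trev (g :: z) = fill (Trev z ++ Trev z ++ Trev z) (pat g) from rfl]
    rw [show (g :: z).length = z.length + 1 from rfl]
    simp [length_fill, ih, pow_succ]
    ring

lemma fill_join (W : List B) (hW : W.count B.bq = 1) :
    ∀ (L : List B) (ss : List B),
      fill ((L.map fun c => fill W [c]).flatten) ss
        = ((fill L ss).map fun c => fill W [c]).flatten := by
  intro L
  induction L with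
  | nil => intro ss; simp
  | cons c L ih =>
    intro ss
    cases c with
    | bq =>
      cases ss with
      | nil => simp
      | cons s ss' =>
        simp only [List.map_cons, List.flatten_cons, fill_bq_single]
        rw [fill_append, hW]
        simp [ih]
    | b0 =>
      simp only [List.map_cons, List.flatten_cons]
      rw [fill_append, count_fill_single W _ hW (by simp)]
      simp [ih]
    | b1 =>
      simp only [List.map_cons, List.flatten_cons]
      rw [fill_append, count_fill_single W _ hW (by simp)]
      simp [ih]

lemma blocks (s' : List A) :
    ∀ r : List A, Trev (r ++ s') = ((Trev r).map fun c => fill (Trev s') [c]).flatten := by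
  intro r
  induction r with
  | nil => simp [Trev]
  | cons g r ih =>
    rw [show Trev (g :: r ++ s')
          = fill (Trev (r ++ s') ++ Trev (r ++ s') ++ Trev (r ++ s')) (pat g) from rfl]
    rw [show Trev (g :: r) = fill (Trev r ++ Trev r ++ Trev r) (pat g) from rfl]
    rw [ih]
    rw [← List.flatten_append, ← List.flatten_append, ← List.map_append, ← List.map_append]
    exact fill_join (Trev s') (count_Trev s') _ _

lemma fill_infix {w z : List B} (hw : B.bq ∉ w) (h : w <:+: z) (ss : List B) :
    w <:+: fill z ss := by
  obtain ⟨s, r, rfl⟩ := h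
  rw [show s ++ w ++ r = s ++ (w ++ r) by simp [List.append_assoc]]
  rw [fill_append, fill_append, fill_eq_self_of_not_mem w _ hw]
  exact ⟨_, _, List.append_assoc _ w _⟩

lemma spanning (m : ℕ) (w : List B) (hw : w ≠ []) (hlen : w.length ≤ m) :
    ∀ Lb : List (List B), (∀ x ∈ Lb, x.length = m) → w <:+: Lb.flatten →
      ∃ x ∈ Lb, ∃ y ∈ Lb, w <:+: x ++ y := by
  intro Lb
  induction Lb with
  | nil =>
    intro _ hocc
    rw [List.flatten_nil, List.infix_nil] at hocc
    exact absurd hocc hw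
  | cons b L ih =>
    intro hm hocc
    rw [List.flatten_cons] at hocc
    obtain ⟨s, r, hsr⟩ := hocc
    by_cases hs : b.length ≤ s.length
    · have hp1 : b <+: b ++ L.flatten := ⟨L.flatten, rfl⟩
      have hp2 : s <+: b ++ L.flatten := ⟨w ++ r, by simpa [List.append_assoc] using hsr⟩
      obtain ⟨s₂, rfl⟩ := List.prefix_of_prefix_length_le hp1 hp2 hs
      have : s₂ ++ w ++ r = L.flatten := by
        apply List.append_cancel_left (as := b)
        simpa [List.append_assoc] using hsr
      obtain ⟨x, hx, y, hy, hxy⟩ := ih (fun x hx => hm x (List.mem_cons_of_mem _ hx)) ⟨s₂, r, this⟩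
      exact ⟨x, List.mem_cons_of_mem _ hx, y, List.mem_cons_of_mem _ hy, hxy⟩
    · cases L with
      | nil =>
        have hb : w <:+: b := ⟨s, r, by simpa using hsr⟩
        exact ⟨b, List.mem_cons_self, b, List.mem_cons_self,
          List.IsInfix.trans hb ⟨[], b, by simp⟩⟩
      | cons b' L' =>
        have hp1 : s ++ w <+: (b ++ b') ++ L'.flatten := by
          refine ⟨r, ?_⟩
          simpa [List.append_assoc] using hsr
        have hlen2 : (s ++ w).length ≤ (b ++ b').length := by
          have hb : b.length = m := hm b (List.mem_cons_self)
          have hb' : b'.length = m := hm b' (by simp)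
          simp only [List.length_append, hb, hb']
          omega
        have hp := List.prefix_of_prefix_length_le hp1 ⟨L'.flatten, rfl⟩ hlen2
        exact ⟨b, List.mem_cons_self, b', by simp,
          List.IsInfix.trans ⟨s, [], by simp⟩ hp.isInfix⟩

lemma mem_lift {M : List B} {V : List B} {e : B} (he : e ∈ M) {z : List B}
    (hz : z <:+: fill V [e]) : z <:+: (M.map fun c => fill V [c]).flatten := by
  obtain ⟨m1, m2, rfl⟩ := List.append_of_mem he
  refine List.IsInfix.trans hz
    ⟨(m1.map fun c => fill V [c]).flatten, (m2.map fun c => fill V [c]).flatten, ?_⟩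
  simp [List.append_assoc]

lemma pair_lift {M : List B} {V : List B} {d d' : B} (h2 : [d, d'] <:+: M) {z : List B}
    (hz : z <:+: fill V [d] ++ fill V [d']) : z <:+: (M.map fun c => fill V [c]).flatten := by
  obtain ⟨m1, m2, hm⟩ := h2
  subst hm
  refine List.IsInfix.trans hz
    ⟨(m1.map fun c => fill V [c]).flatten, (m2.map fun c => fill V [c]).flatten, ?_⟩
  simp [List.append_assoc]

lemma pair_facts : ∀ p q : A, ∀ e : B, e ≠ B.bq →
    e ∈ Trev [p, q] ∧ (∃ d, [d, e] <:+: Trev [p, q]) ∧ (∃ d, [e, d] <:+: Trev [p, q]) := by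
  decide

lemma all4 (V : List B) (hV : V.count B.bq = 1) (p q : A) {e e' : B}
    (he : e ≠ B.bq) (he' : e' ≠ B.bq) {w : List B} (hwq : B.bq ∉ w)
    (hlen : w.length ≤ V.length)
    (hocc : w <:+: fill V [e] ++ fill V [e']) :
    w <:+: ((Trev [p, q]).map fun c => fill V [c]).flatten := by
  have hmem : B.bq ∈ V := List.count_pos_iff.1 (by omega)
  obtain ⟨A₀, A₁, rfl⟩ := List.append_of_mem hmem
  have hcc : A₀.count B.bq = 0 := by
    rw [List.count_append, List.count_cons_self] at hV; omega
  have hA₀ : B.bq ∉ A₀ := List.count_eq_zero.1 hcc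
  have fillV : ∀ c : B, fill (A₀ ++ B.bq :: A₁) [c] = A₀ ++ c :: A₁ := by
    intro c
    rw [fill_append, hcc, List.take_zero, List.drop_zero,
      fill_eq_self_of_not_mem _ _ hA₀, fill_bq_cons, fill_nil_right]
  set V := A₀ ++ B.bq :: A₁ with hVdef
  set N := V.length with hN
  have hNc : ∀ c : B, (fill V [c]).length = N := fun c => length_fill V [c]
  have EqDrop : ∀ c c' : B, ∀ j, A₀.length < j →
      (fill V [c]).drop j = (fill V [c']).drop j := by
    intro c c' j hj
    have h0 : ∀ cc : B, (fill V [cc]).drop j = A₁.drop (j - A₀.length - 1) := by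
      intro cc
      rw [fillV cc, List.drop_append,
        List.drop_eq_nil_of_le (le_of_lt hj), List.nil_append,
        show j - A₀.length = (j - A₀.length - 1) + 1 by omega, List.drop_succ_cons,
        Nat.add_sub_cancel]
    rw [h0 c, h0 c']
  have EqTake : ∀ c c' : B, ∀ j, j ≤ A₀.length →
      (fill V [c]).take j = (fill V [c']).take j := by
    intro c c' j hj
    have h0 : ∀ cc : B, (fill V [cc]).take j = A₀.take j := by
      intro cc
      rw [fillV cc, List.take_append, show j - A₀.length = 0 by omega,
        List.take_zero, List.append_nil]
    rw [h0 c, h0 c']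
  obtain ⟨s, r, hsr⟩ := hocc
  have hsr' : s ++ (w ++ r) = fill V [e] ++ fill V [e'] := by
    simpa [List.append_assoc] using hsr
  by_cases h1 : s.length + w.length ≤ N
  · -- w inside the left block
    have hp1 : s ++ w <+: fill V [e] ++ fill V [e'] := ⟨r, by simpa [List.append_assoc] using hsr⟩
    have hp2 : fill V [e] <+: fill V [e] ++ fill V [e'] := ⟨fill V [e'], rfl⟩
    have hsw : s ++ w <+: fill V [e] :=
      List.prefix_of_prefix_length_le hp1 hp2 (by simp [hNc e]; omega)
    have hwin : w <:+: fill V [e] :=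
      List.IsInfix.trans ⟨s, [], by simp⟩ hsw.isInfix
    exact mem_lift (pair_facts p q e he).1 hwin
  · by_cases h2 : N ≤ s.length
    · -- w inside the right block
      have hp1 : fill V [e] <+: fill V [e] ++ fill V [e'] := ⟨fill V [e'], rfl⟩
      have hp2 : s <+: fill V [e] ++ fill V [e'] := ⟨w ++ r, hsr'⟩
      obtain ⟨s₂, rfl⟩ := List.prefix_of_prefix_length_le hp1 hp2 (by rw [hNc e]; omega)
      have hs2 : s₂ ++ w ++ r = fill V [e'] := by
        have := List.append_cancel_left (as := fill V [e])
          (by simpa [List.append_assoc] using hsr')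
        simpa [List.append_assoc] using this
      exact mem_lift (pair_facts p q e' he').1 ⟨s₂, r, hs2⟩
    · -- w crosses the boundary
      push_neg at h1 h2
      have hwr : w ++ r = (fill V [e]).drop s.length ++ fill V [e'] := by
        have h' := congrArg (List.drop s.length) hsr'
        rw [List.drop_left] at h'
        rw [h', List.drop_append,
          show s.length - (fill V [e]).length = 0 by rw [hNc e]; omega, List.drop_zero]
      have hDlen : ((fill V [e]).drop s.length).length = N - s.length := by
        rw [List.length_drop, hNc e]
      have hw2 : w = (fill V [e]).drop s.length
          ++ (fill V [e']).take (w.length - (N - s.length)) := by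
        have h' := congrArg (List.take w.length) hwr
        rw [show (w ++ r).take w.length = w from List.take_left,
          List.take_append,
          List.take_of_length_le (by rw [hDlen]; omega), hDlen] at h'
        exact h' 
      set j := w.length - (N - s.length) with hj
      by_cases hq : A₀.length < s.length
      · -- the hole lies strictly inside the prefix part: left label is free
        obtain ⟨d, hd⟩ := (pair_facts p q e' he').2.1
        apply pair_lift hd
        refine ⟨(fill V [d]).take s.length, (fill V [e']).drop j, ?_⟩
        rw [hw2, EqDrop e d s.length hq]
        simp only [List.append_assoc]
        rw [List.take_append_drop, ← List.append_assoc, List.take_append_drop]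
      · -- the hole lies in the suffix region: right label is free
        push_neg at hq
        have hjq : j ≤ A₀.length := by omega
        obtain ⟨d, hd⟩ := (pair_facts p q e he).2.2
        apply pair_lift hd
        refine ⟨(fill V [e]).take s.length, (fill V [d]).drop j, ?_⟩
        rw [hw2, EqTake e' d j hjq]
        simp only [List.append_assoc]
        rw [List.take_append_drop, ← List.append_assoc, List.take_append_drop]

end StewAux

theorem stmt_2 (n ℓ : ℕ) (hn : 1 ≤ n) (hℓ : 2 ≤ ℓ) (hnℓ : n ≤ 3 ^ (ℓ - 2))
    (t u : List A) (ht : t.length = ℓ) (htu : t <+: u)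
    (w : List B) (hw : w.length = n) (hbool : ∀ s ∈ w, s ≠ B.bq)
    (hocc : w <:+: stewT u) : w <:+: stewT t := by
  classical
  have hwne : w ≠ [] := by
    intro hnil
    rw [hnil] at hw
    simp at hw
    omega
  obtain ⟨v, rfl⟩ := htu
  rcases tr : t.reverse with _ | ⟨hh, rest⟩
  · exfalso
    have := congrArg List.length tr
    simp [ht] at this
    omega
  rcases rest with _ | ⟨gg, s'⟩
  · exfalso
    have := congrArg List.length tr
    simp [ht] at this
    omega
  set V := Trev s' with hVdef
  have hVcount : V.count B.bq = 1 := count_Trev s'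
  have hslen : s'.length = ℓ - 2 := by
    have := congrArg List.length tr
    simp [ht] at this
    omega
  have hVlen : V.length = 3 ^ (ℓ - 2) := by
    rw [hVdef, length_Trev, hslen]
  have hu : stewT (t ++ v)
      = ((Trev (v.reverse ++ [hh, gg])).map fun c => fill V [c]).flatten := by
    rw [stewT, List.reverse_append, tr,
      show v.reverse ++ (hh :: gg :: s') = (v.reverse ++ [hh, gg]) ++ s' by simp]
    exact blocks s' _
  have htt : stewT t = ((Trev [hh, gg]).map fun c => fill V [c]).flatten := by
    rw [stewT, tr, show hh :: gg :: s' = [hh, gg] ++ s' by simp]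
    exact blocks s' _
  rw [hu] at hocc
  rw [htt]
  have hbq : B.bq ∉ w := fun hm => hbool _ hm rfl
  have hlenw : w.length ≤ V.length := by rw [hw, hVlen]; exact hnℓ
  have hbl : ∀ x ∈ (Trev (v.reverse ++ [hh, gg])).map fun c => fill V [c],
      x.length = V.length := by
    intro x hx
    obtain ⟨c, _, rfl⟩ := List.mem_map.1 hx
    exact length_fill V [c]
  obtain ⟨x, hx, y, hy, hxy⟩ := spanning V.length w hwne hlenw _ hbl hocc
  obtain ⟨c, _, rfl⟩ := List.mem_map.1 hx
  obtain ⟨c', _, rfl⟩ := List.mem_map.1 hy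
  have step1 : ∃ e, e ≠ B.bq ∧ w <:+: fill V [e] ++ fill V [c'] := by
    cases c with
    | bq =>
      refine ⟨B.b0, by simp, ?_⟩
      have h0 : fill (V ++ fill V [c']) [B.b0] = fill V [B.b0] ++ fill V [c'] := by
        rw [fill_append, hVcount]
        simp
      have h1 := fill_infix hbq (by simpa [fill_bq_single] using hxy) [B.b0]
      rwa [h0] at h1
    | b0 => exact ⟨B.b0, by simp, hxy⟩
    | b1 => exact ⟨B.b1, by simp, hxy⟩
  obtain ⟨e, he, hxy1⟩ := step1
  have step2 : ∃ e', e' ≠ B.bq ∧ w <:+: fill V [e] ++ fill V [e'] := by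
    cases c' with
    | bq =>
      refine ⟨B.b0, by simp, ?_⟩
      have h0 : fill (fill V [e] ++ V) [B.b0] = fill V [e] ++ fill V [B.b0] := by
        rw [fill_append, count_fill_single V e hVcount he]
        simp [fill_eq_self_of_not_mem _ _ (List.count_eq_zero.1 (count_fill_single V e hVcount he))]
      have h1 := fill_infix hbq (by simpa [fill_bq_single] using hxy1) [B.b0]
      rwa [h0] at h1
    | b0 => exact ⟨B.b0, by simp, hxy1⟩
    | b1 => exact ⟨B.b1, by simp, hxy1⟩
  obtain ⟨e', he', hxy2⟩ := step2
  exact all4 V hVcount hh gg he he' hbq hlenw hxy2
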